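/- Let κ, μ, ν, σ, τ, ω be real with κ, μ > 0. The 4×4 matrix 𝓑 = [[0,0,1,0],[0,0,0,1],[−ν/κ·(−1),0,0,−i(τ+μ)/√(κμ)],[0,−σ/μ·(−1),−i(ω+ν)/√(κμ),0]] has zero as a semi-simple eigenvalue only if ν = σ = 0. -/
import Mathlib

open Matrix

lemma stmt17_mulVec (a b c d : ℂ) (x : Fin 4 → ℂ) :
    (!![0, 0, 1, 0; 0, 0, 0, 1; a, 0, 0, -Complex.I * c;
        0, b, -Complex.I * d, 0]).mulVec x =
    ![x 2, x 3, a * x 0 - Complex.I * c * x 3, b * x 1 - Complex.I * d * x 2] := by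
  funext i
  fin_cases i <;>
    simp [Matrix.mulVec, dotProduct, Fin.sum_univ_four] <;> ring

/-- Zero is a semi-simple eigenvalue of the longitudinal symbol 𝓑 only if
ν = σ = 0. Semi-simplicity of the eigenvalue 0 is expressed as
ker 𝓑 = ker 𝓑² (geometric = algebraic multiplicity), and 0 being an
eigenvalue as non-injectivity of 𝓑. -/
theorem stmt17 (κ μ ν σ τ ω : ℝ) (hκ : 0 < κ) (hμ : 0 < μ)
    (𝓑 : Matrix (Fin 4) (Fin 4) ℂ)
    (h𝓑 : 𝓑 = !![0, 0, 1, 0;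
                 0, 0, 0, 1;
                 ((ν / κ : ℝ) : ℂ), 0, 0, -Complex.I * ((τ + μ) / Real.sqrt (κ * μ) : ℝ);
                 0, ((σ / μ : ℝ) : ℂ), -Complex.I * ((ω + ν) / Real.sqrt (κ * μ) : ℝ), 0])
    (heig : ¬ Function.Injective (Matrix.toLin' 𝓑))
    (hsemisimple : LinearMap.ker (Matrix.toLin' 𝓑) =
      LinearMap.ker (Matrix.toLin' 𝓑 ∘ₗ Matrix.toLin' 𝓑)) :
    ν = 0 ∧ σ = 0 := by
  set a : ℂ := ((ν / κ : ℝ) : ℂ) with ha_def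
  set b : ℂ := ((σ / μ : ℝ) : ℂ) with hb_def
  set c : ℂ := (((τ + μ) / Real.sqrt (κ * μ) : ℝ) : ℂ) with hc_def
  set d : ℂ := (((ω + ν) / Real.sqrt (κ * μ) : ℝ) : ℂ) with hd_def
  have happ : ∀ x : Fin 4 → ℂ, Matrix.toLin' 𝓑 x =
      ![x 2, x 3, a * x 0 - Complex.I * c * x 3, b * x 1 - Complex.I * d * x 2] := by
    intro x
    rw [Matrix.toLin'_apply, h𝓑, stmt17_mulVec]
  have ha0 : a = 0 ↔ ν = 0 := by
    simp [ha_def, div_eq_zero_iff, hκ.ne']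
  have hb0 : b = 0 ↔ σ = 0 := by
    simp [hb_def, div_eq_zero_iff, hμ.ne']
  -- not both nonzero
  have hnot : ¬ (ν ≠ 0 ∧ σ ≠ 0) := by
    rintro ⟨hν, hσ⟩
    apply heig
    rw [← LinearMap.ker_eq_bot, LinearMap.ker_eq_bot']
    intro x hx
    rw [happ] at hx
    have h0 := congrFun hx 0
    have h1 := congrFun hx 1
    have h2 := congrFun hx 2
    have h3 := congrFun hx 3
    simp only [Matrix.cons_val_zero, Matrix.cons_val_one, Matrix.head_cons,
      Matrix.cons_val_two, Matrix.tail_cons, Matrix.cons_val_three, Pi.zero_apply] at h0 h1 h2 h3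
    have hx2 : x 2 = 0 := h0
    have hx3 : x 3 = 0 := h1
    have hx0 : x 0 = 0 := by
      have h : a * x 0 = 0 := by rw [hx3] at h2; simpa using h2
      rcases mul_eq_zero.mp h with h | h
      · exact absurd (ha0.mp h) hν
      · exact h
    have hx1 : x 1 = 0 := by
      have : b * x 1 = 0 := by rw [hx2] at h3; simpa using h3
      rcases mul_eq_zero.mp this with h | h
      · exact absurd (hb0.mp h) hσ
      · exact h
    funext i
    fin_cases i <;> assumption
  have hmemker : ∀ v : Fin 4 → ℂ,
      Matrix.toLin' 𝓑 (Matrix.toLin' 𝓑 v) = 0 → Matrix.toLin' 𝓑 v = 0 := by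
    intro v hv
    have : v ∈ LinearMap.ker (Matrix.toLin' 𝓑 ∘ₗ Matrix.toLin' 𝓑) := by
      simpa [LinearMap.mem_ker] using hv
    rw [← hsemisimple, LinearMap.mem_ker] at this
    exact this
  have hν : ν = 0 := by
    by_contra hν
    have hσ : σ = 0 := by
      by_contra hσ; exact hnot ⟨hν, hσ⟩
    have hb : b = 0 := hb0.mpr hσ
    have ha : a ≠ 0 := fun h => hν (ha0.mp h)
    set v : Fin 4 → ℂ := ![Complex.I * c, 0, 0, a] with hv_def
    have h1 : Matrix.toLin' 𝓑 v = ![0, a, 0, 0] := by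
      rw [happ]
      funext i
      fin_cases i <;> simp [hv_def, hb] <;> ring
    have h2 : Matrix.toLin' 𝓑 (Matrix.toLin' 𝓑 v) = 0 := by
      rw [h1, happ]
      funext i
      fin_cases i <;> simp [hb]
    have := congrFun ((h1.symm.trans (hmemker v h2))) 1
    simp at this
    exact ha this
  have hσ : σ = 0 := by
    by_contra hσ
    have hb : b ≠ 0 := fun h => hσ (hb0.mp h)
    have ha : a = 0 := ha0.mpr hν
    set v : Fin 4 → ℂ := ![0, Complex.I * d, b, 0] with hv_def
    have h1 : Matrix.toLin' 𝓑 v = ![b, 0, 0, 0] := by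
      rw [happ]
      funext i
      fin_cases i <;> simp [hv_def, ha] <;> ring
    have h2 : Matrix.toLin' 𝓑 (Matrix.toLin' 𝓑 v) = 0 := by
      rw [h1, happ]
      funext i
      fin_cases i <;> simp [ha]
    have := congrFun ((h1.symm.trans (hmemker v h2))) 0
    simp at this
    exact hb this
  exact ⟨hν, hσ⟩
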